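/- arXiv:1503.01080 — 13 statements merged into one kernel-verified Lean document; each statement's English description precedes it below -/
import Mathlib

section
/- Let p be an odd prime. Then for every index i with i < p, the coefficient of x^i in the Chebyshev polynomial T_p (with integer coefficients) is divisible by p. (Thus every coefficient of T_p(x) − a other than the leading coefficient 2^{p−1} and possibly the constant term −a is divisible by p.) -/
open Polynomial

/-- For an odd prime `p`, every coefficient of `T_p` of index `i < p`
(i.e. every coefficient except the leading one) is divisible by `p`. -/
theorem chebyshev_coeff_dvd_of_odd_prime (p : ℕ) (hp : p.Prime) (hodd : Odd p)
    (i : ℕ) (hi : i < p) :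
    (p : ℤ) ∣ (Chebyshev.T ℤ p).coeff i := by
  haveI : Fact p.Prime := ⟨hp⟩
  have hp2 : p ≠ 2 := by
    rintro rfl
    simp [Nat.odd_iff] at hodd
  haveI : Invertible (2 : ZMod p) := by
    apply invertibleOfNonzero
    have : ¬ (p : ℕ) ∣ 2 := by
      intro h
      exact hp2 ((Nat.prime_dvd_prime_iff_eq hp Nat.prime_two).mp h)
    have h2 := (ZMod.natCast_eq_zero_iff 2 p).not.mpr this
    simpa using h2
  have hmap : (Chebyshev.T ℤ p).map (Int.castRingHom (ZMod p))
      = Chebyshev.T (ZMod p) p := by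
    simpa using Polynomial.Chebyshev.map_T (Int.castRingHom (ZMod p)) (p : ℤ)
  have hT : Chebyshev.T (ZMod p) p
      = C (⅟ 2 : ZMod p) * (2 * X : (ZMod p)[X]) ^ p := by
    rw [Polynomial.chebyshev_T_eq_dickson_one_one, Polynomial.dickson_one_one_zmod_p,
      pow_comp, X_comp]
  have hz : ((Chebyshev.T ℤ p).coeff i : ZMod p) = 0 := by
    have := congrArg (fun q => q.coeff i) hmap
    simp only [coeff_map, eq_intCast] at this
    rw [this, hT, mul_pow, show (2 : (ZMod p)[X]) = C 2 from (map_ofNat C 2).symm, ← C_pow, ← mul_assoc,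
      ← C_mul, coeff_C_mul, coeff_X_pow]
    simp [Nat.ne_of_lt hi]
  exact (ZMod.intCast_zmod_eq_zero_iff_dvd _ p).mp hz
end

section
/- Let p be a prime number. Then the set of rational numbers a for which the polynomial T_p(x) − a is irreducible over ℚ is infinite. -/
/-!
For an odd prime `l`, the polynomial `T_p - 1/(2l)` is a unit multiple of
`G = 2l·T_p - 1 ∈ ℤ[X]`. Since `T_p` has degree `p` and leading coefficient `2^(p-1)`, the
reversal of `G` is Eisenstein at `l`: its leading coefficient `2l·T_p(0) - 1` is prime to `l`,
its other coefficients are multiples of `2l`, and its constant term is `l·2^p`. The same two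
extreme coefficients are coprime, so `G` is primitive, and Gauss's lemma carries irreducibility
from `ℤ` to `ℚ`. Distinct odd primes give distinct values `a = 1/(2l)`.
-/

open Polynomial

namespace Polynomial

section Mirror

variable (R : Type*) [CommRing R] [IsDomain R]

noncomputable def mirrorMulEquiv : R[X] ≃* R[X] where
  toFun := mirror
  invFun := mirror
  left_inv := mirror_mirror
  right_inv := mirror_mirror
  map_mul' p q := mirror_mul_of_domain p q

variable {R} {f : R[X]}

theorem irreducible_mirror_iff : Irreducible f.mirror ↔ Irreducible f :=
  MulEquiv.irreducible_iff (f := mirrorMulEquiv R) (x := f)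

theorem isPrimitive_mirror_iff : f.mirror.IsPrimitive ↔ f.IsPrimitive :=
  forall_congr' fun r => imp_congr_left <| by
    have h := map_dvd_iff (mirrorMulEquiv R) (a := C r) (b := f)
    rwa [show mirrorMulEquiv R (C r) = C r from mirror_C r] at h

end Mirror

theorem isPrimitive_of_isRelPrime_coeff {R : Type*} [CommSemiring R] {f : R[X]} {i j : ℕ}
    (h : IsRelPrime (f.coeff i) (f.coeff j)) : f.IsPrimitive :=
  fun r ⟨q, hq⟩ =>
    h ⟨q.coeff i, by rw [hq, coeff_C_mul]⟩ ⟨q.coeff j, by rw [hq, coeff_C_mul]⟩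

theorem irreducible_of_eisenstein_criterion_mirror {R : Type*} [CommRing R] [IsDomain R]
    {f : R[X]} {P : Ideal R} (hP : P.IsPrime) (h0 : f.coeff 0 ∉ P)
    (hfP : ∀ n, n ≠ 0 → f.coeff n ∈ P) (hfd0 : 0 < f.natDegree)
    (hlead : f.leadingCoeff ∉ P ^ 2) (hu : f.IsPrimitive) : Irreducible f := by
  have hf0 : f.coeff 0 ≠ 0 := fun h => h0 (h ▸ P.zero_mem)
  have hcoeff : ∀ n ≤ f.natDegree, f.mirror.coeff n = f.coeff (f.natDegree - n) := by
    intro n hn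
    rw [coeff_mirror, natTrailingDegree_eq_zero.mpr (Or.inr hf0), add_zero, revAt_le hn]
  rw [← irreducible_mirror_iff]
  refine irreducible_of_eisenstein_criterion hP ?_ (fun n hn => ?_) ?_ ?_
    (isPrimitive_mirror_iff.mpr hu)
  · rwa [mirror_leadingCoeff, trailingCoeff_eq_coeff_zero hf0]
  · have hn' : n < f.natDegree := by
      rwa [← mirror_natDegree, ← coe_lt_degree]
    rw [hcoeff n hn'.le]
    exact hfP _ (by omega)
  · rwa [← natDegree_pos_iff_degree_pos, mirror_natDegree]
  · rwa [hcoeff 0 (Nat.zero_le _), Nat.sub_zero]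

end Polynomial

section

variable {c : ℤ} {n : ℕ}

theorem coeff_C_mul_chebyshev_T_sub_one_self (hn : 0 < n) :
    (C c * Chebyshev.T ℤ n - 1).coeff n = c * 2 ^ (n - 1) := by
  have h := Chebyshev.leadingCoeff_T ℤ n
  rw [leadingCoeff, Chebyshev.natDegree_T, Int.natAbs_natCast] at h
  simp [coeff_one, hn.ne', h]

theorem natDegree_C_mul_chebyshev_T_sub_one (hc : c ≠ 0) (hn : 0 < n) :
    (C c * Chebyshev.T ℤ n - 1).natDegree = n := by
  rw [natDegree_sub_eq_left_of_natDegree_lt, natDegree_C_mul hc, Chebyshev.natDegree_T,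
    Int.natAbs_natCast]
  rwa [natDegree_C_mul hc, Chebyshev.natDegree_T, Int.natAbs_natCast, natDegree_one]

theorem isPrimitive_C_mul_chebyshev_T_sub_one (hc : Even c) (hn : 0 < n) :
    (C c * Chebyshev.T ℤ n - 1).IsPrimitive := by
  obtain ⟨d, rfl⟩ := hc
  refine isPrimitive_of_isRelPrime_coeff (i := 0) (j := n) ?_
  rw [coeff_C_mul_chebyshev_T_sub_one_self hn]
  simp only [coeff_sub, coeff_C_mul, coeff_one_zero]
  set t := (Chebyshev.T ℤ n).coeff 0
  have h_two : IsCoprime ((d + d) * t - 1) 2 := ⟨-1, d * t, by ring⟩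
  have h_c : IsCoprime ((d + d) * t - 1) (d + d) := ⟨-1, t, by ring⟩
  exact (h_c.mul_right (h_two.pow_right)).isRelPrime

theorem irreducible_C_mul_chebyshev_T_sub_one {l : ℕ} (hl : l.Prime) (hl2 : l ≠ 2)
    (hn : 0 < n) :
    Irreducible (C (2 * l : ℤ) * Chebyshev.T ℤ n - 1) := by
  have hl0 : (l : ℤ) ≠ 0 := by exact_mod_cast hl.ne_zero
  have hlZ : Prime (l : ℤ) := Nat.prime_iff_prime_int.mp hl
  have hdeg := natDegree_C_mul_chebyshev_T_sub_one (mul_ne_zero two_ne_zero hl0) hn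
  have hl_dvd (a : ℤ) : (l : ℤ) ∣ 2 * l * a := dvd_mul_of_dvd_left (dvd_mul_left _ 2) a
  refine irreducible_of_eisenstein_criterion_mirror
    ((Ideal.span_singleton_prime hl0).mpr hlZ) ?_ (fun k hk => ?_) (by rwa [hdeg]) ?_
    (isPrimitive_C_mul_chebyshev_T_sub_one (even_two_mul _) hn)
  · rw [Ideal.mem_span_singleton]
    intro h
    simp only [coeff_sub, coeff_C_mul, coeff_one_zero] at h
    have := dvd_sub (hl_dvd ((Chebyshev.T ℤ n).coeff 0)) h
    rw [sub_sub_cancel] at this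
    exact hlZ.not_dvd_one this
  · simp only [coeff_sub, coeff_C_mul, coeff_one, hk, if_false, sub_zero]
    exact Ideal.mem_span_singleton.mpr (hl_dvd _)
  · rw [leadingCoeff, hdeg, coeff_C_mul_chebyshev_T_sub_one_self hn, Ideal.span_singleton_pow,
      Ideal.mem_span_singleton]
    intro h
    have h_const : 2 * (l : ℤ) * 2 ^ (n - 1) = l * 2 ^ n := by
      rw [mul_comm 2, mul_assoc, ← pow_succ', Nat.sub_add_cancel hn]
    rw [h_const, pow_two, mul_dvd_mul_iff_left hl0] at h
    have h2 : l ∣ 2 := by exact_mod_cast hlZ.dvd_of_dvd_pow h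
    exact hl2 ((Nat.prime_dvd_prime_iff_eq hl Nat.prime_two).mp h2)

theorem irreducible_chebyshev_T_sub_C_inv {l : ℕ} (hl : l.Prime) (hl2 : l ≠ 2) (hn : 0 < n) :
    Irreducible (Chebyshev.T ℚ n - C (2 * l : ℚ)⁻¹) := by
  have h := (isPrimitive_C_mul_chebyshev_T_sub_one (even_two_mul (l : ℤ)) hn)
    |>.irreducible_iff_irreducible_map_fraction_map (K := ℚ)
    |>.mp (irreducible_C_mul_chebyshev_T_sub_one hl hl2 hn)
  have hc : (2 * l : ℚ) ≠ 0 := by have := hl.ne_zero; positivity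
  have hmap : (C (2 * l : ℤ) * Chebyshev.T ℤ n - 1).map (algebraMap ℤ ℚ) =
      C (2 * l : ℚ) * (Chebyshev.T ℚ n - C (2 * l : ℚ)⁻¹) := by
    rw [mul_sub, ← C_mul, mul_inv_cancel₀ hc, C_1, Polynomial.map_sub, Polynomial.map_mul,
      map_C, Polynomial.map_one, Chebyshev.map_T]
    push_cast
    rfl
  rwa [hmap, irreducible_isUnit_mul (isUnit_C.mpr hc.isUnit)] at h

/-- For a prime `p`, there are infinitely many rational numbers `a`
such that `T_p(x) - a` is irreducible over `ℚ`. -/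
theorem infinite_irreducible_chebyshev_sub_const (p : ℕ) (hp : p.Prime) :
    {a : ℚ | Irreducible (Chebyshev.T ℚ p - C a)}.Infinite := by
  have h_odd_primes : {l : ℕ | l.Prime ∧ l ≠ 2}.Infinite :=
    Nat.infinite_setOfPred_prime.sdiff (Set.finite_singleton 2)
  have h_inj : Set.InjOn (fun l : ℕ => (2 * l : ℚ)⁻¹) {l : ℕ | l.Prime ∧ l ≠ 2} :=
    fun a _ b _ hab => by simpa using hab
  refine (h_odd_primes.image h_inj).mono ?_
  rintro _ ⟨l, ⟨hl, hl2⟩, rfl⟩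
  exact irreducible_chebyshev_T_sub_C_inv hl hl2 hp.pos
end
end

section
/- Let p be a prime number and let a be a real number that is transcendental over ℚ. Then the polynomial T_p(x) − a, regarded as a polynomial with coefficients in the intermediate field ℚ(a) ⊆ ℝ generated by a over ℚ, is irreducible over ℚ(a). -/
/-!
If `x` is transcendental over `F` and `w ∈ F[X]` is nonconstant, then `x ↦ w` is an isomorphism
from `F⟮x⟯` onto the subfield `F(w)` of the rational function field `F(X)`. It carries
`w(Y) - x` to `w(Y) - w(X)`, the minimal polynomial of `X` over `F(w)`, which is irreducible
(`RatFunc.irreducible_minpolyX`). Apply this to `w = T_p`, of degree `p > 0`.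
-/

open Polynomial IntermediateField algebraAdjoinAdjoin

theorem Polynomial.irreducible_map_sub_C_adjoinSimple_gen {F E : Type*} [Field F] [Field E]
    [Algebra F E] {x : E} (hx : Transcendental F x) {w : F[X]} (hw : 0 < w.natDegree) :
    Irreducible (w.map (algebraMap F F⟮x⟯) - C (AdjoinSimple.gen F x)) := by
  set f : RatFunc F := algebraMap F[X] (RatFunc F) w
  have hnum : f.num = w := RatFunc.num_algebraMap w
  have hdenom : f.denom = 1 := RatFunc.denom_algebraMap w
  have hf : ¬∃ c, f = RatFunc.C c := by
    rw [RatFunc.eq_C_iff, hnum]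
    omega
  let e : F⟮f⟯ ≃ₐ[F] F⟮x⟯ := (RatFunc.algEquivOfTranscendental f
    (f.transcendental_of_ne_C hf)).symm.trans (RatFunc.algEquivOfTranscendental x hx)
  have he : e (AdjoinSimple.gen F f) = AdjoinSimple.gen F x := by
    ext; simp [e]
  have hmap : (f.minpolyX F⟮f⟯).map (e : F⟮f⟯ →+* F⟮x⟯) =
      w.map (algebraMap F F⟮x⟯) - C (AdjoinSimple.gen F x) := by
    rw [RatFunc.minpolyX, hnum, hdenom, Polynomial.map_one, mul_one, Polynomial.map_sub,
      Polynomial.map_map, map_C]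
    congr 1
    · exact congrArg (map · w) e.toAlgHom.comp_algebraMap
    · exact congrArg C he
  rw [← hmap]
  exact (MulEquiv.irreducible_iff (mapEquiv e.toRingEquiv)).mpr (f.irreducible_minpolyX hf)

/-- For a prime `p` and a real number `a` transcendental over `ℚ`,
the polynomial `T_p(x) - a`, with coefficients in the intermediate field `ℚ⟮a⟯ ⊆ ℝ`,
is irreducible over `ℚ⟮a⟯`. -/
theorem chebyshev_sub_transcendental_irreducible (p : ℕ) (hp : p.Prime)
    (a : ℝ) (ha : Transcendental ℚ a) :
    Irreducible (Chebyshev.T ℚ⟮a⟯ p - C (AdjoinSimple.gen ℚ a)) := by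
  have hdeg : 0 < (Chebyshev.T ℚ p).natDegree := by
    rw [Chebyshev.natDegree_T, Int.natAbs_natCast]
    exact hp.pos
  rw [← Chebyshev.map_T (algebraMap ℚ ℚ⟮a⟯)]
  exact irreducible_map_sub_C_adjoinSimple_gen ha hdeg
end

section
/- Let m be a positive integer that is not a power of 2, and let a, b be real numbers with T_m(b) = a. If b is constructible over the subfield ℚ(a) of ℝ generated by a, then the polynomial T_m(x) − a is not irreducible over ℚ(a). -/
set_option maxHeartbeats 1000000
set_option synthInstance.maxHeartbeats 400000


open Polynomial

/-- A real number `b` is constructible over a subfield `F` of `ℝ` if there is a finite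
chain of subfields `F = F₀ ⊆ F₁ ⊆ … ⊆ F_k` of `ℝ` with `b ∈ F_k`, each step obtained by
adjoining a square root of an element of the previous field. -/
def IsConstructibleOver (F : Subfield ℝ) (b : ℝ) : Prop :=
  ∃ (k : ℕ) (Fs : ℕ → Subfield ℝ), Fs 0 = F ∧ b ∈ Fs k ∧
    ∀ i < k, ∃ x : ℝ, x ^ 2 ∈ Fs i ∧ Fs (i + 1) = Subfield.closure (↑(Fs i) ∪ {x})

/-- The degree of the Chebyshev polynomial `T_n` over a field of characteristic zero. -/
lemma degree_chebyshev_T (K : Type*) [Field K] [CharZero K] :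
    ∀ n : ℕ, (Chebyshev.T K (n : ℤ)).degree = n := by
  intro n
  induction n using Nat.twoStepInduction with
  | zero => simp [Chebyshev.T_zero]
  | one => simp [Chebyshev.T_one]
  | more n ih1 ih2 =>
    have h : ((n : ℤ) + 2) = ((n + 2 : ℕ) : ℤ) := by push_cast; ring
    have hrec := Chebyshev.T_add_two K (n : ℤ)
    rw [h] at hrec
    rw [hrec]
    have h2X : (2 * X : K[X]).degree = 1 := by
      compute_degree!
    have hlead : (2 * X * Chebyshev.T K ((n : ℤ) + 1)).degree = ((n + 2 : ℕ) : WithBot ℕ) := by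
      rw [degree_mul, h2X]
      have : ((n : ℤ) + 1) = ((n + 1 : ℕ) : ℤ) := by push_cast; ring
      rw [this, ih2]
      push_cast
      rw [← Nat.cast_one (R := WithBot ℕ), ← Nat.cast_add, ← Nat.cast_add]
      norm_num
      ring
    rw [degree_sub_eq_left_of_degree_lt, hlead]
    rw [hlead, ih1]
    exact_mod_cast Nat.lt_add_of_pos_right (by norm_num)

open IntermediateField in
/-- An element of a tower of quadratic extensions of `F` has minimal polynomial whose
degree divides a power of `2`. -/
lemma tower_step (F : Subfield ℝ) (k : ℕ) (Fs : ℕ → Subfield ℝ) (h0 : Fs 0 = F)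
    (hstep : ∀ i < k, ∃ x : ℝ, x ^ 2 ∈ Fs i ∧
      Fs (i + 1) = Subfield.closure (↑(Fs i) ∪ {x})) :
    ∀ i ≤ k, ∃ E : IntermediateField F ℝ, E.toSubfield = Fs i ∧
      FiniteDimensional F E ∧ Module.finrank F E ∣ 2 ^ i := by
  intro i hi
  induction i with
  | zero =>
    refine ⟨⊥, ?_, inferInstance, by simp [IntermediateField.finrank_bot]⟩
    rw [IntermediateField.bot_toSubfield, h0]
    ext y
    constructor
    · rintro ⟨z, rfl⟩; exact z.2
    · intro hy; exact ⟨⟨y, hy⟩, rfl⟩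
  | succ i ih =>
    obtain ⟨E, hE, hfd, hdvd⟩ := ih (Nat.le_of_succ_le hi)
    obtain ⟨x, hx2, hFs⟩ := hstep i (Nat.lt_of_succ_le hi)
    haveI := hfd
    have hx2E : x ^ 2 ∈ E := by
      show x ^ 2 ∈ E.toSubfield
      rw [hE]; exact hx2
    set c : E := ⟨x ^ 2, hx2E⟩ with hc
    have hroot : Polynomial.aeval x (X ^ 2 - C c : Polynomial E) = 0 := by
      simp [hc]
    have hint : IsIntegral E x :=
      ⟨X ^ 2 - C c, monic_X_pow_sub_C c two_ne_zero, hroot⟩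
    haveI : FiniteDimensional (↥E) (↥(adjoin (↥E) {x})) :=
      adjoin.finiteDimensional hint
    have hrange : Set.range (algebraMap (↥E) ℝ) = (E : Set ℝ) := by
      ext y
      constructor
      · rintro ⟨z, rfl⟩; exact z.2
      · intro hy; exact ⟨⟨y, hy⟩, rfl⟩
    have hfin2 : Module.finrank (↥E) ↥(adjoin (↥E) {x}) ∣ 2 := by
      rw [adjoin.finrank hint]
      have hdv : minpoly (↥E) x ∣ X ^ 2 - C c := minpoly.dvd _ _ hroot
      have hne : (X ^ 2 - C c : Polynomial (↥E)) ≠ 0 :=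
        (monic_X_pow_sub_C c two_ne_zero).ne_zero
      have hle : (minpoly (↥E) x).natDegree ≤ 2 := by
        have h := natDegree_le_of_dvd hdv hne
        simpa [natDegree_X_pow_sub_C] using h
      have hpos := minpoly.natDegree_pos hint
      set d := (minpoly (↥E) x).natDegree with hd
      interval_cases d <;> norm_num
    refine ⟨(adjoin (↥E) {x}).restrictScalars F, ?_, ?_, ?_⟩
    · rw [hFs]
      have h1 : ((adjoin (↥E) {x}).restrictScalars F).toSubfield
          = (adjoin (↥E) {x}).toSubfield := rfl
      rw [h1, adjoin_toSubfield, hrange]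
      congr 1
      rw [← hE]
      rfl
    · exact FiniteDimensional.trans F (↥E) ↥(adjoin (↥E) {x})
    · have h3 : Module.finrank F (↥E) * Module.finrank (↥E) ↥(adjoin (↥E) {x})
          = Module.finrank F ↥((adjoin (↥E) {x}).restrictScalars F) :=
        Module.finrank_mul_finrank F (↥E) ↥(adjoin (↥E) {x})
      rw [← h3, pow_succ]
      exact mul_dvd_mul hdvd hfin2

/-- Let `m` be a positive integer that is not a power of 2 and `a`, `b`
real numbers with `T_m(b) = a`.  If `b` is constructible over the subfield `ℚ(a)` of `ℝ`
generated by `a`, then `T_m(x) - a` is not irreducible over `ℚ(a)`. -/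
theorem chebyshev_sub_const_reducible_of_constructible_root (m : ℕ) (hm : 0 < m)
    (hm2 : ¬ ∃ k : ℕ, m = 2 ^ k) (a b : ℝ)
    (hab : (Chebyshev.T ℝ m).eval b = a)
    (hb : IsConstructibleOver (Subfield.closure {a}) b) :
    ¬ Irreducible (Chebyshev.T (Subfield.closure {a} : Subfield ℝ) m -
        C (⟨a, Subfield.subset_closure rfl⟩ : Subfield.closure ({a} : Set ℝ))) := by
  intro hirr
  set F : Subfield ℝ := Subfield.closure {a} with hF
  set a' : F := ⟨a, Subfield.subset_closure rfl⟩ with ha'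
  set p : Polynomial F := Chebyshev.T F m - C a' with hp
  have hdeg : p.natDegree = m := by
    have hT : (Chebyshev.T (↥F) (m : ℤ)).degree = m := degree_chebyshev_T (↥F) m
    have h1 : p.natDegree = (Chebyshev.T (↥F) (m : ℤ)).natDegree := natDegree_sub_C
    rw [h1, natDegree_eq_of_degree_eq_some hT]
  have hp0 : p ≠ 0 := by
    intro h
    rw [h, natDegree_zero] at hdeg
    omega
  have hmap : p.map (algebraMap (↥F) ℝ) = Chebyshev.T ℝ m - C a := by
    rw [hp, Polynomial.map_sub, Chebyshev.map_T, Polynomial.map_C]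
    rfl
  have haev : Polynomial.aeval b p = 0 := by
    rw [aeval_def, ← eval_map, hmap]
    simp [hab]
  have hmin : p * C p.leadingCoeff⁻¹ = minpoly (↥F) b :=
    minpoly.eq_of_irreducible hirr haev
  have hmdeg : (minpoly (↥F) b).natDegree = m := by
    rw [← hmin, natDegree_mul hp0 (by
      simp [leadingCoeff_ne_zero.mpr hp0]), natDegree_C, hdeg, add_zero]
  obtain ⟨k, Fs, h0, hbk, hstep⟩ := hb
  obtain ⟨E, hE, hfd, hdvd⟩ := tower_step F k Fs h0 hstep k le_rfl
  haveI := hfd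
  have hbE : b ∈ E := by
    show b ∈ E.toSubfield
    rw [hE]; exact hbk
  have hdvd2 : (minpoly (↥F) b).natDegree ∣ 2 ^ k := by
    have hb' : b = algebraMap (↥E) ℝ (⟨b, hbE⟩ : ↥E) := rfl
    have hdd := minpoly.degree_dvd (K := ↥F) (x := (⟨b, hbE⟩ : ↥E))
      (IsIntegral.of_finite _ _)
    rw [hb', minpoly.algebraMap_eq (algebraMap (↥E) ℝ).injective]
    exact hdd.trans hdvd
  rw [hmdeg] at hdvd2
  obtain ⟨j, -, hj⟩ := (Nat.dvd_prime_pow Nat.prime_two).mp hdvd2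
  exact hm2 ⟨j, hj⟩
end

section
/- Let m be a positive integer that is not a power of 2, and let a be a real number with |a| ≤ 1. If there exists a real number b with T_m(b) = a such that b is constructible over the subfield ℚ(a) of ℝ generated by a, then a is an algebraic number (algebraic over ℚ). -/
/-!
If `a` were transcendental, then so would be any `b` with `T_m(b) = a`, and `X ↦ b` would
identify the extension `ℚ(X) / ℚ(T_m(X))` with `ℚ(b) / ℚ(a)`. By the degree formula for
rational functions behind Lüroth's theorem, `[ℚ(X) : ℚ(T_m(X))] = deg T_m = m`. Since `b` lies
in a tower of quadratic extensions of `ℚ(a)`, `m` would divide a power of two.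
-/

open Polynomial

open IntermediateField

theorem Transcendental.relfinrank_adjoin_aeval {K L : Type*} [Field K] [Field L] [Algebra K L]
    {b : L} (hb : Transcendental K b) (p : K[X]) :
    relfinrank K⟮Polynomial.aeval b p⟯ K⟮b⟯ = p.natDegree := by
  let f : RatFunc K →ₐ[K] L :=
    K⟮b⟯.val.comp (RatFunc.algEquivOfTranscendental b hb).toAlgHom
  have hX : f RatFunc.X = b := by simp [f]
  set P : RatFunc K := algebraMap K[X] (RatFunc K) p
  have hp : f P = Polynomial.aeval b p := by simp [f, P]
  calc relfinrank K⟮Polynomial.aeval b p⟯ K⟮b⟯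
      = relfinrank (K⟮P⟯.map f) (K⟮(RatFunc.X : RatFunc K)⟯.map f) := by
        simp only [adjoin_map, Set.image_singleton, hX, hp]
    _ = Module.finrank K⟮P⟯ (RatFunc K) := by
        rw [relfinrank_map_map, RatFunc.adjoin_X, relfinrank_top_right]
    _ = p.natDegree := by
        simp [P, RatFunc.finrank_eq_max_natDegree, RatFunc.num_algebraMap,
          RatFunc.denom_algebraMap]

theorem IntermediateField.toSubfield_adjoin_rat {E : Type*} [Field E] [CharZero E] (S : Set E) :
    (adjoin ℚ S).toSubfield = Subfield.closure S := by
  refine le_antisymm (Subfield.closure_le.mpr (Set.union_subset ?_ Subfield.subset_closure))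
    (Subfield.closure_mono Set.subset_union_right)
  rintro _ ⟨q, rfl⟩
  simp [SubfieldClass.ratCast_mem]

theorem Subfield.le_closure_union_singleton {E : Type*} [Field E] (K : Subfield E) (x : E) :
    K ≤ closure (K ∪ {x}) :=
  fun _ hy ↦ subset_closure (Or.inl hy)

theorem Subfield.relfinrank_closure_union_singleton_dvd_two {E : Type*} [Field E]
    (K : Subfield E) {x : E} (hx : x ^ 2 ∈ K) :
    K.relfinrank (closure (K ∪ {x})) ∣ 2 := by
  have hle := K.le_closure_union_singleton x
  have hadjoin : extendScalars hle = K⟮x⟯ := by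
    apply IntermediateField.toSubfield_injective
    rw [extendScalars_toSubfield, IntermediateField.adjoin_toSubfield,
      show Set.range (algebraMap K E) = K from Subtype.range_coe]
  set q : K[X] := X ^ 2 - C ⟨x ^ 2, hx⟩
  have hq : q.Monic := monic_X_pow_sub_C _ two_ne_zero
  have hqx : aeval x q = 0 := by simp [q]; exact sub_self _
  have hint : IsIntegral K x := ⟨q, hq, hqx⟩
  have hdeg : (minpoly K x).natDegree ≤ 2 := by
    simpa [q] using natDegree_le_of_dvd (minpoly.dvd K x hqx) hq.ne_zero
  rw [relfinrank_eq_finrank_of_le hle, hadjoin, IntermediateField.adjoin.finrank hint]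
  interval_cases h : (minpoly K x).natDegree
  · exact absurd h (minpoly.natDegree_pos hint).ne'
  · exact one_dvd 2
  · exact dvd_rfl

theorem IsConstructibleOver.exists_relfinrank_dvd_two_pow {F : Subfield ℝ} {b : ℝ}
    (h : IsConstructibleOver F b) :
    ∃ (K : Subfield ℝ) (k : ℕ), F ≤ K ∧ b ∈ K ∧ F.relfinrank K ∣ 2 ^ k := by
  obtain ⟨k, Fs, rfl, hb, hstep⟩ := h
  suffices ∀ i ≤ k, Fs 0 ≤ Fs i ∧ (Fs 0).relfinrank (Fs i) ∣ 2 ^ i from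
    ⟨Fs k, k, (this k le_rfl).1, hb, (this k le_rfl).2⟩
  intro i hi
  induction i with
  | zero => simp
  | succ i ih =>
    obtain ⟨hle, hdvd⟩ := ih (by omega)
    obtain ⟨x, hx, hFs⟩ := hstep i (by omega)
    have hle' : Fs i ≤ Fs (i + 1) := hFs ▸ (Fs i).le_closure_union_singleton x
    refine ⟨hle.trans hle', ?_⟩
    rw [← Subfield.relfinrank_mul_relfinrank hle hle', pow_succ]
    exact mul_dvd_mul hdvd (hFs ▸ (Fs i).relfinrank_closure_union_singleton_dvd_two hx)

theorem isAlgebraic_of_m_sectable_general (m : ℕ) (hm2 : ¬ ∃ k : ℕ, m = 2 ^ k) (a : ℝ)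
    (hb : ∃ b : ℝ, (Chebyshev.T ℝ m).eval b = a ∧
      IsConstructibleOver (Subfield.closure {a}) b) :
    IsAlgebraic ℚ a := by
  obtain ⟨b, hab, hcons⟩ := hb
  obtain ⟨K, k, -, hbK, hdvd⟩ := hcons.exists_relfinrank_dvd_two_pow
  have haeval : aeval b (Chebyshev.T ℚ m) = a := by rw [Chebyshev.aeval_T, hab]
  by_contra ha
  have hb_tr : Transcendental ℚ b := (transcendental_aeval_iff.mp (haeval ▸ ha)).1
  have hdeg : ℚ⟮a⟯.relfinrank ℚ⟮b⟯ = m := by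
    simpa [← haeval, Chebyshev.natDegree_T] using
      hb_tr.relfinrank_adjoin_aeval (Chebyshev.T ℚ m)
  have hab_le : ℚ⟮a⟯.toSubfield ≤ ℚ⟮b⟯.toSubfield := adjoin_simple_le_iff.mpr
    (haeval ▸ algebra_adjoin_le_adjoin ℚ {b} (aeval_mem_adjoin_singleton ℚ b))
  have hbK' : ℚ⟮b⟯.toSubfield ≤ K := by
    rwa [toSubfield_adjoin_rat, Subfield.closure_le, Set.singleton_subset_iff]
  have hm : m ∣ 2 ^ k := calc
    m = ℚ⟮a⟯.relfinrank ℚ⟮b⟯ := hdeg.symm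
    _ ∣ ℚ⟮a⟯.toSubfield.relfinrank K :=
      Dvd.intro _ (Subfield.relfinrank_mul_relfinrank hab_le hbK')
    _ ∣ 2 ^ k := by rwa [toSubfield_adjoin_rat]
  obtain ⟨j, -, rfl⟩ := (Nat.dvd_prime_pow Nat.prime_two).mp hm
  exact hm2 ⟨j, rfl⟩

/-- If `m` is not a power of 2, `|a| ≤ 1`, and some real `b` with
`T_m(b) = a` is constructible over the subfield `ℚ(a)` of `ℝ` generated by `a`,
then `a` is algebraic over `ℚ`. -/
theorem isAlgebraic_of_m_sectable (m : ℕ) (hm : 0 < m) (hm2 : ¬ ∃ k : ℕ, m = 2 ^ k)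
    (a : ℝ) (ha : |a| ≤ 1)
    (hb : ∃ b : ℝ, (Chebyshev.T ℝ m).eval b = a ∧
      IsConstructibleOver (Subfield.closure {a}) b) :
    IsAlgebraic ℚ a :=
  isAlgebraic_of_m_sectable_general m hm2 a hb
end

section
/- Let q be an odd prime, m a positive integer, and r a nonzero rational number. (a) If the q-adic valuation of r is ≥ 0, then either T_m(r) = 0 or the q-adic valuation of T_m(r) is ≥ 0. (b) If the q-adic valuation of r is < 0, then T_m(r) ≠ 0 and the q-adic valuation of T_m(r) equals m times the q-adic valuation of r. -/
/-!
Work with the `q`-adic norm `|·|`. The recurrence `T (n + 2) = 2 X T (n + 1) - T n` keeps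
`T_n(r)` in the unit ball when `r` is in it. When `|r| > 1` and `|2| = 1`, the term
`2 r T_{n+1}(r)`, of norm `|r| ^ (n + 2)`, strictly dominates `T_n(r)`, of norm `|r| ^ n`, so
the ultrametric inequality is an equality and `|T_n(r)| = |r| ^ n`.
-/

open Polynomial

variable {p : ℕ} [Fact p.Prime]

theorem padicNorm_two_of_ne_two (hp : p ≠ 2) : padicNorm p 2 = 1 := by
  rw [← Nat.cast_ofNat, padicNorm.nat_eq_one_iff]
  exact fun h ↦ hp ((Nat.prime_dvd_prime_iff_eq Fact.out Nat.prime_two).mp h)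

theorem padicNorm_sub_of_lt {a b : ℚ} (h : padicNorm p b < padicNorm p a) :
    padicNorm p (a - b) = padicNorm p a := by
  rw [sub_eq_add_neg, padicNorm.add_eq_max_of_ne (by rw [padicNorm.neg]; exact h.ne'),
    padicNorm.neg, max_eq_left h.le]

theorem padicValRat_nonneg_iff_padicNorm_le_one (x : ℚ) :
    0 ≤ padicValRat p x ↔ padicNorm p x ≤ 1 := by
  rcases eq_or_ne x 0 with rfl | hx
  · simp
  rw [padicNorm.eq_zpow_of_nonzero hx,
    zpow_le_one_iff_right₀ (by exact_mod_cast (Fact.out : p.Prime).one_lt), neg_nonpos]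

theorem padicValRat_eq_of_padicNorm_eq {x y : ℚ} (h : padicNorm p x = padicNorm p y) :
    padicValRat p x = padicValRat p y := by
  rcases eq_or_ne x 0 with rfl | hx
  · rw [padicNorm.zero] at h
    rw [padicNorm.zero_of_padicNorm_eq_zero h.symm]
  have hy : y ≠ 0 := fun hy ↦ padicNorm.nonzero hx (by rw [h, hy, padicNorm.zero])
  have hp : (1 : ℚ) < p := by exact_mod_cast (Fact.out : p.Prime).one_lt
  rw [padicNorm.eq_zpow_of_nonzero hx, padicNorm.eq_zpow_of_nonzero hy] at h
  exact neg_inj.mp (zpow_right_injective₀ (zero_lt_one.trans hp) hp.ne' h)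

theorem padicNorm_eval_T_le_one {r : ℚ} (hr : padicNorm p r ≤ 1) (n : ℤ) :
    padicNorm p ((Chebyshev.T ℚ n).eval r) ≤ 1 := by
  induction n using Chebyshev.induct' with
  | zero => simp
  | one => simpa using hr
  | add_two n ih₁ ih₀ =>
    rw [Chebyshev.T_add_two]
    simp only [eval_sub, eval_mul, eval_ofNat, eval_X]
    refine padicNorm.sub.trans (max_le ?_ ih₀)
    rw [padicNorm.mul, padicNorm.mul]
    have h₂ : padicNorm p 2 ≤ 1 := by exact_mod_cast padicNorm.of_nat (p := p) 2
    exact mul_le_one₀ (mul_le_one₀ h₂ (padicNorm.nonneg _) hr) (padicNorm.nonneg _) ih₁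
  | neg n ih => rwa [Chebyshev.T_neg]

theorem padicNorm_eval_T_of_one_lt (hp : p ≠ 2) {r : ℚ} (hr : 1 < padicNorm p r) (n : ℕ) :
    padicNorm p ((Chebyshev.T ℚ n).eval r) = padicNorm p r ^ n := by
  induction n using Nat.twoStepInduction with
  | zero => simp
  | one => simp
  | more n ih₀ ih₁ =>
    push_cast at ih₁ ⊢
    rw [Chebyshev.T_add_two]
    simp only [eval_sub, eval_mul, eval_ofNat, eval_X]
    have hlead :
        padicNorm p (2 * r * (Chebyshev.T ℚ (n + 1)).eval r) = padicNorm p r ^ (n + 2) := by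
      rw [padicNorm.mul, padicNorm.mul, padicNorm_two_of_ne_two hp, ih₁]
      ring
    rw [padicNorm_sub_of_lt (by rw [hlead, ih₀]; exact pow_lt_pow_right₀ hr (by omega)), hlead]

theorem padicValRat_chebyshev_general (q : ℕ) (hq : q.Prime) (hqodd : Odd q)
    (m : ℕ) (r : ℚ) :
    (0 ≤ padicValRat q r →
      (Chebyshev.T ℚ m).eval r = 0 ∨ 0 ≤ padicValRat q ((Chebyshev.T ℚ m).eval r)) ∧
    (padicValRat q r < 0 →
      (Chebyshev.T ℚ m).eval r ≠ 0 ∧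
        padicValRat q ((Chebyshev.T ℚ m).eval r) = m * padicValRat q r) := by
  have : Fact q.Prime := ⟨hq⟩
  refine ⟨fun hv ↦ Or.inr ?_, fun hv ↦ ?_⟩
  · rw [padicValRat_nonneg_iff_padicNorm_le_one] at hv ⊢
    exact padicNorm_eval_T_le_one hv m
  rw [← not_le, padicValRat_nonneg_iff_padicNorm_le_one, not_le] at hv
  have hq2 : q ≠ 2 := by rintro rfl; exact Nat.not_odd_iff_even.mpr even_two hqodd
  have hT := padicNorm_eval_T_of_one_lt hq2 hv m
  refine ⟨fun h ↦ ?_, ?_⟩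
  · rw [h, padicNorm.zero] at hT
    exact (pow_pos (zero_lt_one.trans hv) m).ne hT
  · rw [← padicValRat.pow]
    exact padicValRat_eq_of_padicNorm_eq (hT.trans (IsAbsoluteValue.abv_pow (padicNorm q) r m).symm)

/-- Let `q` be an odd prime, `m` a positive integer and `r` a nonzero
rational number.  (a) If the `q`-adic valuation of `r` is nonnegative, then either
`T_m(r) = 0` or the `q`-adic valuation of `T_m(r)` is nonnegative.  (b) If the `q`-adic
valuation of `r` is negative, then `T_m(r) ≠ 0` and the `q`-adic valuation of `T_m(r)`
is `m` times that of `r`. -/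
theorem padicValRat_chebyshev (q : ℕ) (hq : q.Prime) (hqodd : Odd q)
    (m : ℕ) (hm : 0 < m) (r : ℚ) (hr : r ≠ 0) :
    (0 ≤ padicValRat q r →
      (Chebyshev.T ℚ m).eval r = 0 ∨ 0 ≤ padicValRat q ((Chebyshev.T ℚ m).eval r)) ∧
    (padicValRat q r < 0 →
      (Chebyshev.T ℚ m).eval r ≠ 0 ∧
        padicValRat q ((Chebyshev.T ℚ m).eval r) = m * padicValRat q r) :=
  padicValRat_chebyshev_general q hq hqodd m r
end

section
/- Let m be an even positive integer. Then there exists a rational number a with |a| ≤ 1 such that: (i) there is a real number b, constructible over ℚ (i.e., over the prime subfield of ℝ), with T_m(b) = a; and (ii) no rational number r satisfies T_m(r) = a. -/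
/-!
Write `m = 2n` and take `a = T_n(1/3)`. Since `T_{2n} = T_n ∘ T_2` and `T_2(√(2/3)) = 1/3`, the
square root `√(2/3)` is a constructible solution of `T_m(x) = a`, and `|a| ≤ 1` as `|1/3| ≤ 1`.
A rational solution is excluded `3`-adically: `T_k` has integer coefficients and leading
coefficient `2^(k-1)`, a `3`-adic unit, so `‖T_k(x)‖ = ‖x‖^k` when `‖x‖ > 1` and `‖T_k(x)‖ ≤ 1`
otherwise. Hence `‖a‖ = 3^n`, while `T_{2n}(r) = a` would force `‖r‖² = 3`, which is impossible
because `3`-adic norms are integral powers of `3`.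
-/

open Polynomial

namespace Polynomial

variable {K : Type*} [NormedField K] [IsUltrametricDist K]

theorem norm_eval_le_one_of_norm_coeff_le_one {P : K[X]} (hP : ∀ i, ‖P.coeff i‖ ≤ 1) {x : K}
    (hx : ‖x‖ ≤ 1) : ‖P.eval x‖ ≤ 1 := by
  rw [eval_eq_sum_range]
  refine IsUltrametricDist.norm_sum_le_of_forall_le_of_nonneg zero_le_one fun i _ => ?_
  rw [norm_mul, norm_pow]
  exact mul_le_one₀ (hP i) (by positivity) (pow_le_one₀ (norm_nonneg x) hx)

theorem norm_eval_eq_pow_natDegree_of_one_lt_norm {P : K[X]} (hP : ∀ i, ‖P.coeff i‖ ≤ 1)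
    (hlc : ‖P.leadingCoeff‖ = 1) {x : K} (hx : 1 < ‖x‖) : ‖P.eval x‖ = ‖x‖ ^ P.natDegree := by
  set d := P.natDegree
  have hlead : ‖P.leadingCoeff * x ^ d‖ = ‖x‖ ^ d := by rw [norm_mul, norm_pow, hlc, one_mul]
  have hlow : ‖∑ i ∈ Finset.range d, P.coeff i * x ^ i‖ < ‖x‖ ^ d := by
    rcases Nat.eq_zero_or_pos d with hd | hd
    · simp [hd]
    refine lt_of_le_of_lt ?_ (pow_lt_pow_right₀ hx (Nat.sub_lt hd one_pos))
    refine IsUltrametricDist.norm_sum_le_of_forall_le_of_nonneg (by positivity) fun i hi => ?_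
    rw [norm_mul, norm_pow]
    calc ‖P.coeff i‖ * ‖x‖ ^ i ≤ 1 * ‖x‖ ^ (d - 1) := by
          gcongr
          · exact hP i
          · exact hx.le
          · exact Nat.le_sub_one_of_lt (Finset.mem_range.mp hi)
      _ = ‖x‖ ^ (d - 1) := one_mul _
  rw [eval_eq_sum_range, Finset.sum_range_succ, ← leadingCoeff,
    IsUltrametricDist.norm_add_eq_max_of_norm_ne_norm (hlow.trans_eq hlead.symm).ne, hlead,
    max_eq_right hlow.le]

end Polynomial

namespace Polynomial.Chebyshev

theorem eval_T_two_mul {R : Type*} [CommRing R] (n : ℤ) (x : R) :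
    (T R (2 * n)).eval x = (T R n).eval (2 * x ^ 2 - 1) := by
  rw [mul_comm, T_mul, eval_comp, T_two]
  simp

theorem ratCast_eval_T {K : Type*} [Field K] [CharZero K] (n : ℤ) (x : ℚ) :
    (((T ℚ n).eval x : ℚ) : K) = (T K n).eval (x : K) := by
  simpa using algebraMap_eval_T (R' := K) x n

end Polynomial.Chebyshev

namespace Padic

open Polynomial.Chebyshev

variable {p : ℕ} [Fact p.Prime]

theorem norm_sq_ne_prime (x : ℚ_[p]) : ‖x‖ ^ 2 ≠ p := by
  rcases eq_or_ne x 0 with rfl | hx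
  · simpa [eq_comm] using (Fact.out : p.Prime).ne_zero
  rw [norm_eq_zpow_neg_valuation hx, ← zpow_natCast, ← zpow_mul]
  intro h
  have hp : (1 : ℝ) < p := by exact_mod_cast (Fact.out : p.Prime).one_lt
  have := zpow_right_injective₀ (by positivity) hp.ne' (h.trans (zpow_one (p : ℝ)).symm)
  omega

theorem norm_coeff_T_le_one (n : ℤ) (i : ℕ) : ‖(T ℚ_[p] n).coeff i‖ ≤ 1 := by
  rw [← map_T (Int.castRingHom ℚ_[p]), coeff_map]
  exact norm_int_le_one _

theorem norm_leadingCoeff_T (hp : p ≠ 2) (n : ℤ) : ‖(T ℚ_[p] n).leadingCoeff‖ = 1 := by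
  have h2 : ‖((2 : ℕ) : ℚ_[p])‖ = 1 :=
    norm_natCast_eq_one_iff.mpr ((Nat.coprime_primes Fact.out Nat.prime_two).mpr hp)
  rw [leadingCoeff_T, norm_pow, ← Nat.cast_ofNat, h2, one_pow]

theorem norm_eval_T_of_one_lt_norm (hp : p ≠ 2) (n : ℕ) {x : ℚ_[p]} (hx : 1 < ‖x‖) :
    ‖(T ℚ_[p] n).eval x‖ = ‖x‖ ^ n := by
  rw [norm_eval_eq_pow_natDegree_of_one_lt_norm (norm_coeff_T_le_one n) (norm_leadingCoeff_T hp n) hx,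
    natDegree_T, Int.natAbs_natCast]

theorem eval_T_two_mul_ne_eval_T_inv (hp : p ≠ 2) {n : ℕ} (hn : n ≠ 0) (x : ℚ_[p]) :
    (T ℚ_[p] (2 * n)).eval x ≠ (T ℚ_[p] n).eval (p : ℚ_[p])⁻¹ := by
  have hp1 : (1 : ℝ) < p := by exact_mod_cast (Fact.out : p.Prime).one_lt
  have hinv : ‖(p : ℚ_[p])⁻¹‖ = p := by rw [norm_inv, norm_p, inv_inv]
  have hrhs : ‖(T ℚ_[p] n).eval (p : ℚ_[p])⁻¹‖ = (p : ℝ) ^ n := by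
    rw [norm_eval_T_of_one_lt_norm hp n (hinv ▸ hp1), hinv]
  intro h
  rcases le_or_gt ‖x‖ 1 with hx | hx
  · have := norm_eval_le_one_of_norm_coeff_le_one (norm_coeff_T_le_one (2 * n)) hx
    rw [h, hrhs] at this
    exact (one_lt_pow₀ hp1 hn).not_ge this
  · have := congrArg norm h
    rw [← Nat.cast_two, ← Nat.cast_mul, norm_eval_T_of_one_lt_norm hp _ hx, hrhs, pow_mul] at this
    exact norm_sq_ne_prime x ((pow_left_inj₀ (by positivity) (by positivity) hn).mp this)

end Padic

theorem isConstructibleOver_of_sq_mem {F : Subfield ℝ} {x : ℝ} (hx : x ^ 2 ∈ F) :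
    IsConstructibleOver F x := by
  refine ⟨1, fun i => if i = 0 then F else Subfield.closure (F ∪ {x}), rfl,
    Subfield.subset_closure (Or.inr rfl), fun i hi => ?_⟩
  obtain rfl : i = 0 := by omega
  exact ⟨x, hx, rfl⟩

/-- For every even positive integer `m` there is a rational `a` with
`|a| ≤ 1` such that `T_m(x) = a` has a real solution constructible over `ℚ`
(the prime subfield `⊥` of `ℝ`) but no rational solution. -/
theorem exists_constructible_not_rational_chebyshev_root (m : ℕ) (hm : 0 < m)
    (hmeven : Even m) :
    ∃ a : ℚ, |a| ≤ 1 ∧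
      (∃ b : ℝ, IsConstructibleOver ⊥ b ∧ (Chebyshev.T ℝ m).eval b = (a : ℝ)) ∧
      ∀ r : ℚ, (Chebyshev.T ℚ m).eval r ≠ a := by
  obtain ⟨n, rfl⟩ := hmeven
  have hn : n ≠ 0 := by omega
  have h2n : ((n + n : ℕ) : ℤ) = 2 * n := by push_cast; ring
  refine ⟨(Chebyshev.T ℚ n).eval 3⁻¹, ?_, ⟨√(2 / 3), ?_, ?_⟩, fun r hr => ?_⟩
  · have := Chebyshev.abs_eval_T_real_le_one n (x := 3⁻¹) (by norm_num)
    rw [← Rat.cast_ofNat, ← Rat.cast_inv, ← Chebyshev.ratCast_eval_T] at this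
    exact_mod_cast this
  · refine isConstructibleOver_of_sq_mem ?_
    rw [Real.sq_sqrt (by norm_num)]
    exact div_mem (ofNat_mem _ 2) (ofNat_mem _ 3)
  · rw [h2n, Chebyshev.eval_T_two_mul, Real.sq_sqrt (by norm_num), Chebyshev.ratCast_eval_T]
    norm_num
  · refine Padic.eval_T_two_mul_ne_eval_T_inv (p := 3) (by norm_num) hn r ?_
    rw [← h2n, ← Chebyshev.ratCast_eval_T, hr, Chebyshev.ratCast_eval_T]
    norm_num
end

section
/- Let F be a subfield of ℂ all of whose elements are real (have imaginary part 0), let α be a complex number of modulus 1, and set a = Re α (viewed as a complex number). Let F(α) and F(a) denote the subfields of ℂ generated by F together with α, respectively F together with a. Then: (i) the set of elements of F(α) with imaginary part 0 is exactly F(a); and (ii) if α ≠ 1 and α ≠ −1, then α ∉ F(a) (so that, since α satisfies α² − 2aα + 1 = 0, the extension F(α)/F(a) has degree exactly 2). -/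
/-!
Since `‖α‖ = 1` we have `α⁻¹ = conj α`, so `a = (α + α⁻¹) / 2` lies in `F(α)` and `α` is a root of
`X² - 2aX + 1` over the real field `K = F(a)`. Hence `F(α) = K + Kα`, and `p + qα` with `p, q ∈ K`
has imaginary part `q · Im α`: it is real only if `q = 0` or `α` itself is real, i.e. lies in `K`.
A real `α` of modulus one is `±1`.
-/

open Complex ComplexConjugate

namespace Complex

theorem im_eq_zero_of_mem_closure {s : Set ℂ} (hs : ∀ z ∈ s, z.im = 0) :
    ∀ z ∈ Subfield.closure s, z.im = 0 := by
  have : Subfield.closure s ≤ ofRealHom.fieldRange := Subfield.closure_le.mpr fun z hz =>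
    ⟨z.re, (ext rfl (hs z hz).symm)⟩
  intro z hz
  obtain ⟨r, rfl⟩ := this hz
  exact ofReal_im r

theorem re_mem_of_norm_eq_one {α : ℂ} (hα : ‖α‖ = 1) {L : Subfield ℂ} (hαL : α ∈ L) :
    (α.re : ℂ) ∈ L := by
  have hinv : α⁻¹ = conj α := by
    rw [inv_def, normSq_eq_norm_sq, hα]
    simp
  have hre : (α.re : ℂ) = (α + α⁻¹) / 2 := by
    rw [hinv, add_conj]
    push_cast
    ring
  rw [hre]
  exact div_mem (add_mem hαL (inv_mem hαL)) (ofNat_mem L 2)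

theorem eq_one_or_eq_neg_one_of_norm_eq_one {α : ℂ} (hα : ‖α‖ = 1) (him : α.im = 0) :
    α = 1 ∨ α = -1 := by
  have hαre : α = α.re := ext rfl him
  rw [hαre, norm_real, Real.norm_eq_abs, abs_eq zero_le_one] at hα
  rcases hα with h | h
  · exact .inl (by rw [hαre, h, ofReal_one])
  · exact .inr (by rw [hαre, h, ofReal_neg, ofReal_one])

section QuadraticSubfield

variable {K : Subfield ℂ} (hK : ∀ z ∈ K, z.im = 0) {α : ℂ}
  (htr : α + conj α ∈ K) (hnorm : α * conj α ∈ K)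

/-- `K + Kα`, a subfield because `α² = (α + conj α) α - α conj α` and
`(p + qα)⁻¹ = conj (p + qα) / ((p + qα) conj (p + qα))` for real `p, q`. -/
noncomputable def quadraticSubfield : Subfield ℂ where
  carrier := {z | ∃ p ∈ K, ∃ q ∈ K, z = p + q * α}
  zero_mem' := ⟨0, K.zero_mem, 0, K.zero_mem, by ring⟩
  one_mem' := ⟨1, K.one_mem, 0, K.zero_mem, by ring⟩
  add_mem' := by
    rintro _ _ ⟨p, hp, q, hq, rfl⟩ ⟨r, hr, s, hs, rfl⟩
    exact ⟨p + r, add_mem hp hr, q + s, add_mem hq hs, by ring⟩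
  neg_mem' := by
    rintro _ ⟨p, hp, q, hq, rfl⟩
    exact ⟨-p, neg_mem hp, -q, neg_mem hq, by ring⟩
  mul_mem' := by
    rintro _ _ ⟨p, hp, q, hq, rfl⟩ ⟨r, hr, s, hs, rfl⟩
    refine ⟨p * r - q * s * (α * conj α), ?_, p * s + q * r + q * s * (α + conj α), ?_, by ring⟩
    · exact sub_mem (mul_mem hp hr) (mul_mem (mul_mem hq hs) hnorm)
    · exact add_mem (add_mem (mul_mem hp hs) (mul_mem hq hr)) (mul_mem (mul_mem hq hs) htr)
  inv_mem' := by
    rintro _ ⟨p, hp, q, hq, rfl⟩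
    set N := p * p + p * q * (α + conj α) + q * q * (α * conj α)
    have hNK : N ∈ K := add_mem (add_mem (mul_mem hp hp) (mul_mem (mul_mem hp hq) htr))
      (mul_mem (mul_mem hq hq) hnorm)
    refine ⟨(p + q * (α + conj α)) / N, div_mem (add_mem hp (mul_mem hq htr)) hNK,
      -q / N, div_mem (neg_mem hq) hNK, ?_⟩
    have hconj : conj (p + q * α) = p + q * conj α := by
      rw [map_add, map_mul, conj_eq_iff_im.mpr (hK p hp), conj_eq_iff_im.mpr (hK q hq)]
    have hN : (p + q * α) * (p + q * conj α) = N := by ring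
    rcases eq_or_ne (p + q * α) 0 with h0 | h0
    · rw [h0, zero_mul] at hN
      simp [h0, ← hN]
    have hN0 : N ≠ 0 := hN ▸ mul_ne_zero h0 (hconj ▸ (map_ne_zero _).mpr h0)
    refine inv_eq_of_mul_eq_one_right ?_
    field_simp
    linear_combination hN

theorem mem_of_mem_quadraticSubfield {z : ℂ} (hz : z ∈ quadraticSubfield hK htr hnorm)
    (him : z.im = 0) : z ∈ K := by
  obtain ⟨p, hp, q, hq, rfl⟩ := hz
  rcases eq_or_ne α.im 0 with hα | hα
  · have hαK : α ∈ K := by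
      have : α = (α + conj α) / 2 := by rw [conj_eq_iff_im.mpr hα]; ring
      rw [this]
      exact div_mem htr (ofNat_mem K 2)
    exact add_mem hp (mul_mem hq hαK)
  · have hq0 : q = 0 := by
      have : q.re * α.im = 0 := by simpa [hK p hp, hK q hq] using him
      exact ext ((mul_eq_zero.mp this).resolve_right hα) (hK q hq)
    simpa [hq0] using hp

end QuadraticSubfield

end Complex

/-- Let `F` be a subfield of `ℂ` all of whose elements are real, let
`α` be a complex number of modulus 1, and let `a = Re α` (as a complex number).
Then (i) the real elements of `F(α)` are exactly `F(a)`, and (ii) if `α ≠ ±1` then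
`α ∉ F(a)` (so `F(α)/F(a)` is a degree-two extension, `α` being a root of
`x² - 2ax + 1`). -/
theorem real_part_of_adjoin_angle (F : Subfield ℂ) (hF : ∀ z ∈ F, z.im = 0)
    (α : ℂ) (hα : ‖α‖ = 1) :
    (∀ z : ℂ, (z ∈ Subfield.closure (↑F ∪ {α}) ∧ z.im = 0) ↔
        z ∈ Subfield.closure (↑F ∪ {(α.re : ℂ)})) ∧
    (α ≠ 1 → α ≠ -1 → α ∉ Subfield.closure (↑F ∪ {(α.re : ℂ)})) := by
  set K := Subfield.closure (↑F ∪ {(α.re : ℂ)})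
  have hKreal : ∀ z ∈ K, z.im = 0 := im_eq_zero_of_mem_closure <| by
    rintro z (hz | rfl)
    exacts [hF z hz, ofReal_im _]
  have hK_le : K ≤ Subfield.closure (↑F ∪ {α}) := Subfield.closure_le.mpr <| by
    rintro z (hz | rfl)
    exacts [Subfield.subset_closure (.inl hz),
      re_mem_of_norm_eq_one hα (Subfield.subset_closure (.inr rfl))]
  have htr : α + conj α ∈ K := by
    rw [add_conj, ofReal_mul, ofReal_ofNat]
    exact mul_mem (ofNat_mem K 2) (Subfield.subset_closure (.inr rfl))
  have hnorm : α * conj α ∈ K := by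
    rw [mul_conj, normSq_eq_norm_sq, hα, one_pow, ofReal_one]
    exact K.one_mem
  have hle : Subfield.closure (↑F ∪ {α}) ≤ quadraticSubfield hKreal htr hnorm :=
    Subfield.closure_le.mpr <| by
      rintro z (hz | rfl)
      exacts [⟨z, Subfield.subset_closure (.inl hz), 0, K.zero_mem, by ring⟩,
        ⟨0, K.zero_mem, 1, K.one_mem, by ring⟩]
  refine ⟨fun z => ⟨fun ⟨hz, him⟩ => mem_of_mem_quadraticSubfield hKreal htr hnorm (hle hz) him,
    fun hz => ⟨hK_le hz, hKreal z hz⟩⟩, fun h1 hm1 hαK => ?_⟩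
  rcases eq_one_or_eq_neg_one_of_norm_eq_one hα (hKreal α hαK) with h | h
  exacts [h1 h, hm1 h]
end

section
/- Let m be a positive integer and let α, β be complex numbers of modulus 1 with α ≠ ±1 and β ≠ ±1, and suppose β^m = α or β^m = α⁻¹ (equivalently T_m(Re β) = Re α). Then β belongs to the subfield ℚ(α) of ℂ generated by α if and only if Re β (viewed as a complex number) belongs to the subfield ℚ(Re α) of ℂ generated by Re α. -/
/-!
Put `K = ℚ(Re α)` and `L = ℚ(α)`. Since `α⁻¹ = conj α`, the number `α` is a root of
`X² - 2 Re α · X + 1` over the real field `K`, so every element of `L` is `a + b α`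
with `a, b ∈ K`, and its real part `a + b Re α` lies in `K`. Conversely, if
`s = β + β⁻¹ = 2 Re β` lies in `K ⊆ L`, then `β ^ m = p + q β` and `β⁻¹ ^ m = p + q β⁻¹`
with `p, q ∈ L`; as `β ^ m = α ^ {±1}` is not its own inverse, `q ≠ 0` and `β = (β ^ m - p) / q ∈ L`.
-/

open ComplexConjugate

section PowAddInv

variable {R σ : Type*} [CommRing R] [SetLike σ R] [SubringClass σ R]

theorem exists_pow_eq_add_mul_of_add_mem (S : σ) {x y : R} (hs : x + y ∈ S) (hxy : x * y = 1)
    (n : ℕ) : ∃ p ∈ S, ∃ q ∈ S, x ^ n = p + q * x ∧ y ^ n = p + q * y := by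
  induction n with
  | zero => exact ⟨1, one_mem S, 0, zero_mem S, by ring, by ring⟩
  | succ n ih =>
    obtain ⟨p, hp, q, hq, hx, hy⟩ := ih
    refine ⟨-q, neg_mem hq, p + q * (x + y), add_mem hp (mul_mem hq hs), ?_, ?_⟩
    · rw [pow_succ, hx]; linear_combination -q * hxy
    · rw [pow_succ, hy]; linear_combination -q * hxy

end PowAddInv

theorem Subfield.mem_of_add_inv_mem_of_pow_mem {F : Type*} [Field F] (L : Subfield F) {x : F}
    {m : ℕ} (hs : x + x⁻¹ ∈ L) (hpow : x ^ m ∈ L) (hsq : (x ^ m) ^ 2 ≠ 1) : x ∈ L := by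
  rcases eq_or_ne x 0 with rfl | hx
  · exact L.zero_mem
  obtain ⟨p, hp, q, hq, hxm, hxm'⟩ :=
    exists_pow_eq_add_mul_of_add_mem L hs (mul_inv_cancel₀ hx) m
  have hq0 : q ≠ 0 := by
    rintro rfl
    have hself : (x ^ m)⁻¹ = x ^ m := by rw [← inv_pow, hxm', hxm]; ring
    exact hsq (by rw [sq]; nth_rewrite 1 [← hself]; exact inv_mul_cancel₀ (pow_ne_zero m hx))
  have hx_eq : x = (x ^ m - p) / q := by rw [eq_div_iff hq0, hxm]; ring
  rw [hx_eq]
  exact L.div_mem (L.sub_mem hpow hp) hq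

section QuadraticOverReal

variable {K : Subfield ℂ} (hK : ∀ z ∈ K, conj z = z) {α : ℂ}
  (htr : α + conj α ∈ K) (hnorm : α * conj α ∈ K)
include hK htr hnorm

theorem exists_eq_add_mul_of_mem_closure_singleton {z : ℂ}
    (hz : z ∈ Subfield.closure {α}) : ∃ a ∈ K, ∃ b ∈ K, z = a + b * α := by
  set t := α + conj α
  set n := α * conj α
  have hsq : α ^ 2 = t * α - n := by ring
  induction hz using Subfield.closure_induction with
  | mem x hx =>
    rw [Set.mem_singleton_iff.mp hx]
    exact ⟨0, K.zero_mem, 1, K.one_mem, by ring⟩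
  | one => exact ⟨1, K.one_mem, 0, K.zero_mem, by ring⟩
  | add x y _ _ ihx ihy =>
    obtain ⟨a, ha, b, hb, rfl⟩ := ihx
    obtain ⟨c, hc, d, hd, rfl⟩ := ihy
    exact ⟨a + c, K.add_mem ha hc, b + d, K.add_mem hb hd, by ring⟩
  | neg x _ ihx =>
    obtain ⟨a, ha, b, hb, rfl⟩ := ihx
    exact ⟨-a, K.neg_mem ha, -b, K.neg_mem hb, by ring⟩
  | mul x y _ _ ihx ihy =>
    obtain ⟨a, ha, b, hb, rfl⟩ := ihx
    obtain ⟨c, hc, d, hd, rfl⟩ := ihy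
    refine ⟨a * c - b * d * n, K.sub_mem (K.mul_mem ha hc) (K.mul_mem (K.mul_mem hb hd) hnorm),
      a * d + b * c + b * d * t, ?_, by linear_combination b * d * hsq⟩
    exact K.add_mem (K.add_mem (K.mul_mem ha hd) (K.mul_mem hb hc))
      (K.mul_mem (K.mul_mem hb hd) htr)
  | inv x _ ihx =>
    obtain ⟨a, ha, b, hb, rfl⟩ := ihx
    have hconj : conj (a + b * α) = (a + b * t) - b * α := by
      simp only [map_add, map_mul, hK a ha, hK b hb, t]; ring
    have hN : (a + b * α) * conj (a + b * α) = a ^ 2 + a * b * t + b ^ 2 * n := by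
      rw [hconj]; linear_combination -b ^ 2 * hsq
    have hNK : a ^ 2 + a * b * t + b ^ 2 * n ∈ K :=
      K.add_mem (K.add_mem (K.pow_mem ha 2) (K.mul_mem (K.mul_mem ha hb) htr))
        (K.mul_mem (K.pow_mem hb 2) hnorm)
    have hinv :
        (a + b * α)⁻¹ = conj (a + b * α) * ((a + b * α) * conj (a + b * α))⁻¹ := by
      rw [Complex.inv_def, Complex.mul_conj, Complex.ofReal_inv]
    refine ⟨(a + b * t) * (a ^ 2 + a * b * t + b ^ 2 * n)⁻¹,
      K.mul_mem (K.add_mem ha (K.mul_mem hb htr)) (K.inv_mem hNK),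
      -b * (a ^ 2 + a * b * t + b ^ 2 * n)⁻¹, K.mul_mem (K.neg_mem hb) (K.inv_mem hNK), ?_⟩
    rw [hinv, hN, hconj]; ring

theorem re_mem_of_mem_closure_singleton {z : ℂ} (hz : z ∈ Subfield.closure {α}) :
    (z.re : ℂ) ∈ K := by
  obtain ⟨a, ha, b, hb, rfl⟩ := exists_eq_add_mul_of_mem_closure_singleton hK htr hnorm hz
  have hre : ((a + b * α).re : ℂ) = (2 * a + b * (α + conj α)) / 2 := by
    rw [Complex.re_eq_add_conj, map_add, map_mul, hK a ha, hK b hb]; ring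
  rw [hre]
  exact K.div_mem (K.add_mem (K.mul_mem (ofNat_mem K 2) ha) (K.mul_mem hb htr)) (ofNat_mem K 2)

end QuadraticOverReal

theorem conj_eq_self_of_mem_closure_ofReal {r : ℝ} {z : ℂ}
    (hz : z ∈ Subfield.closure {(r : ℂ)}) : conj z = z := by
  have hle : Subfield.closure {(r : ℂ)} ≤ Complex.ofRealHom.fieldRange := by
    rw [Subfield.closure_le, Set.singleton_subset_iff]
    exact ⟨r, rfl⟩
  obtain ⟨x, rfl⟩ := hle hz
  exact Complex.conj_ofReal x

theorem mem_adjoin_iff_re_mem_adjoin_re_general (m : ℕ) (α β : ℂ)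
    (hα : ‖α‖ = 1) (hβ : ‖β‖ = 1)
    (hα1 : α ≠ 1) (hα1' : α ≠ -1)
    (hpow : β ^ m = α ∨ β ^ m = α⁻¹) :
    β ∈ Subfield.closure ({α} : Set ℂ) ↔
      (β.re : ℂ) ∈ Subfield.closure ({(α.re : ℂ)} : Set ℂ) := by
  set K := Subfield.closure ({(α.re : ℂ)} : Set ℂ)
  set L := Subfield.closure ({α} : Set ℂ)
  have hαL : α ∈ L := Subfield.subset_closure rfl
  have htr : α + conj α ∈ K := by
    rw [Complex.add_conj, Complex.ofReal_mul]
    exact K.mul_mem (by simp) (Subfield.subset_closure rfl)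
  have hnorm : α * conj α ∈ K := by rw [Complex.mul_conj', hα]; simp
  have hK : ∀ z ∈ K, conj z = z := fun _ ↦ conj_eq_self_of_mem_closure_ofReal
  refine ⟨re_mem_of_mem_closure_singleton hK htr hnorm, fun hre ↦ ?_⟩
  have hKL : K ≤ L := by
    rw [Subfield.closure_le, Set.singleton_subset_iff, SetLike.mem_coe, Complex.re_eq_add_conj,
      ← Complex.inv_eq_conj hα]
    exact L.div_mem (L.add_mem hαL (L.inv_mem hαL)) (ofNat_mem L 2)
  have hα_sq : α ^ 2 ≠ 1 := by simp [sq_eq_one_iff, hα1, hα1']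
  refine L.mem_of_add_inv_mem_of_pow_mem (m := m) (hKL ?_) ?_ ?_
  · rw [Complex.inv_eq_conj hβ, Complex.add_conj, Complex.ofReal_mul]
    exact K.mul_mem (by simp) hre
  · rcases hpow with h | h <;> rw [h]
    exacts [hαL, L.inv_mem hαL]
  · rcases hpow with h | h <;> rw [h]
    exacts [hα_sq, by rwa [inv_pow, ne_eq, inv_eq_one]]

/-- Let `m` be a positive integer and `α`, `β` complex numbers of
modulus 1, different from `±1`, with `β ^ m = α` or `β ^ m = α⁻¹`.  Then `β` lies in the
subfield `ℚ(α)` of `ℂ` generated by `α` iff `Re β` (as a complex number) lies in the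
subfield `ℚ(Re α)` of `ℂ` generated by `Re α`. -/
theorem mem_adjoin_iff_re_mem_adjoin_re (m : ℕ) (hm : 0 < m) (α β : ℂ)
    (hα : ‖α‖ = 1) (hβ : ‖β‖ = 1)
    (hα1 : α ≠ 1) (hα1' : α ≠ -1) (hβ1 : β ≠ 1) (hβ1' : β ≠ -1)
    (hpow : β ^ m = α ∨ β ^ m = α⁻¹) :
    β ∈ Subfield.closure ({α} : Set ℂ) ↔
      (β.re : ℂ) ∈ Subfield.closure ({(α.re : ℂ)} : Set ℂ) :=
  mem_adjoin_iff_re_mem_adjoin_re_general m α β hα hβ hα1 hα1' hpow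
end

section
/- Let m be a positive integer, let α be a complex number of modulus 1 with α ≠ 1 and α ≠ −1, and set a = Re α. Then the polynomial z^m − α has a zero in the subfield ℚ(α) of ℂ generated by α if and only if there exists a real number b in the subfield ℚ(a) of ℝ generated by a with T_m(b) = a. -/
/-!
If `z ^ 2 = 2 x z - 1`, then `z ^ n = T_n(x) + (z - x) U_{n-1}(x)`, since both sides satisfy the
Chebyshev recurrence. A unit complex number `β` satisfies this with `x = Re β`, so an `m`-th root
`β` of `α` gives `T_m(Re β) = Re α`, and `Re β ∈ ℚ(a)` because `ℚ(α) = ℚ(a) + ℚ(a) α`.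
Conversely, if `T_m(b) = a`, a root `ζ` of `z ^ 2 - 2 b z + 1` (or its inverse) is an `m`-th root
of `α`, and the identity `α = a + (ζ - b) U_{m-1}(b)` solves for `ζ` inside `ℚ(α)`; the factor
`U_{m-1}(b)` is nonzero because `α` is not real.
-/

open Polynomial Complex ComplexConjugate

namespace Polynomial.Chebyshev

variable {R : Type*} [CommRing R]

theorem pow_eq_eval_T_add_mul_eval_U {x z : R} (hz : z ^ 2 = 2 * x * z - 1) (n : ℕ) :
    z ^ n = (T R n).eval x + (z - x) * (U R (n - 1 : ℤ)).eval x := by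
  induction n using Nat.twoStepInduction with
  | zero => simp
  | one => simp
  | more n ih₀ ih₁ =>
    have hT : T R ((n + 2 : ℕ) : ℤ) = 2 * X * T R ((n + 1 : ℕ) : ℤ) - T R n := by
      push_cast; exact T_add_two R n
    have hU : U R ((n + 2 : ℕ) - 1 : ℤ) = 2 * X * U R ((n + 1 : ℕ) - 1 : ℤ) - U R (n - 1) := by
      rw [show ((n + 2 : ℕ) - 1 : ℤ) = (n - 1) + 2 by push_cast; ring,
        show ((n + 1 : ℕ) - 1 : ℤ) = (n - 1) + 1 by push_cast; ring, U_add_two]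
    rw [hT, hU]
    simp only [eval_sub, eval_mul, eval_X, eval_ofNat]
    linear_combination z ^ n * hz + 2 * x * ih₁ - ih₀

theorem eval_U_mem {S : Type*} [SetLike S R] [SubringClass S R] {s : S} {x : R} (hx : x ∈ s)
    (n : ℤ) : (U R n).eval x ∈ s := by
  rw [← map_U (SubringClass.subtype s), ← show SubringClass.subtype s ⟨x, hx⟩ = x from rfl,
    eval_map, eval₂_at_apply]
  exact SetLike.coe_mem _

theorem exists_pow_eq_of_eval_T_eq {K : Type*} [Field K] [IsAlgClosed K] {x y α : K}
    (hα : α ^ 2 = 2 * y * α - 1) {n : ℕ} (hT : (T K n).eval x = y) :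
    ∃ ζ : K, ζ ^ 2 = 2 * x * ζ - 1 ∧ ζ ^ n = α := by
  obtain ⟨s, hs⟩ := IsAlgClosed.exists_pow_nat_eq (x ^ 2 - 1) two_pos
  have hζ : (x + s) ^ 2 = 2 * x * (x + s) - 1 := by linear_combination hs
  have hζ' : (x - s) ^ 2 = 2 * x * (x - s) - 1 := by linear_combination hs
  have hsum : (x + s) ^ n + (x - s) ^ n = 2 * y := by
    rw [pow_eq_eval_T_add_mul_eval_U hζ, pow_eq_eval_T_add_mul_eval_U hζ', hT]; ring
  have hprod : (x + s) ^ n * (x - s) ^ n = 1 := by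
    rw [← mul_pow, show (x + s) * (x - s) = 1 by linear_combination -hs, one_pow]
  have : ((x + s) ^ n - α) * ((x - s) ^ n - α) = 0 := by
    linear_combination hprod - α * hsum + hα
  rcases mul_eq_zero.mp this with h | h
  · exact ⟨x + s, hζ, sub_eq_zero.mp h⟩
  · exact ⟨x - s, hζ', sub_eq_zero.mp h⟩

end Polynomial.Chebyshev

namespace Complex

open Polynomial.Chebyshev

theorem sq_eq_two_mul_re_mul_sub_one {z : ℂ} (hz : ‖z‖ = 1) : z ^ 2 = 2 * z.re * z - 1 := by
  have hconj : z * conj z = 1 := by rw [mul_conj, normSq_eq_norm_sq, hz]; simp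
  have htrace : z + conj z = 2 * z.re := by exact_mod_cast add_conj z
  linear_combination z * htrace - hconj

theorem re_pow_eq_eval_T {z : ℂ} (hz : ‖z‖ = 1) (n : ℕ) : (z ^ n).re = (T ℝ n).eval z.re := by
  rw [pow_eq_eval_T_add_mul_eval_U (sq_eq_two_mul_re_mul_sub_one hz), ← complex_ofReal_eval_T,
    ← complex_ofReal_eval_U]
  simp [-complex_ofReal_eval_T, -complex_ofReal_eval_U]

theorem ofReal_re_ne_of_norm_eq_one {α : ℂ} (hα : ‖α‖ = 1) (h₁ : α ≠ 1) (h₂ : α ≠ -1) :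
    (α.re : ℂ) ≠ α := by
  intro h
  rw [← h, norm_real, Real.norm_eq_abs] at hα
  rcases abs_eq (zero_le_one' ℝ) |>.mp hα with h' | h' <;> simp_all

section closure

variable {α : ℂ} (hα : ‖α‖ = 1)
include hα

theorem ofReal_re_mem_closure : (α.re : ℂ) ∈ Subfield.closure {α} := by
  have hα0 : α ≠ 0 := norm_ne_zero_iff.mp (by simp [hα])
  have : (α.re : ℂ) = (α ^ 2 + 1) / (2 * α) := by
    field_simp; linear_combination -(sq_eq_two_mul_re_mul_sub_one hα)
  have hmem := Subfield.subset_closure (Set.mem_singleton α)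
  rw [this]
  exact div_mem (add_mem (pow_mem hmem 2) (one_mem _)) (mul_mem (ofNat_mem _ 2) hmem)

theorem ofReal_mem_closure {x : ℝ} (hx : x ∈ Subfield.closure {α.re}) :
    (x : ℂ) ∈ Subfield.closure {α} :=
  (Subfield.closure_le (t := (Subfield.closure {α}).comap ofRealHom)).mpr
    (by simpa using ofReal_re_mem_closure hα) hx

theorem exists_add_mul_eq_of_mem_closure {z : ℂ} (hz : z ∈ Subfield.closure {α}) :
    ∃ x y : Subfield.closure {α.re}, ((x : ℝ) : ℂ) + (y : ℝ) * α = z := by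
  set F := Subfield.closure {α.re}
  obtain ⟨t, ht⟩ : ∃ t : F, (t : ℝ) = 2 * α.re :=
    ⟨⟨2 * α.re, mul_mem (ofNat_mem F 2) (Subfield.subset_closure rfl)⟩, rfl⟩
  have hα2 : α ^ 2 = (t : ℝ) * α - 1 := by
    rw [ht]; exact_mod_cast sq_eq_two_mul_re_mul_sub_one hα
  have hαconj : conj α = (t : ℝ) - α := by
    rw [ht, eq_sub_iff_add_eq', add_conj]
  induction hz using Subfield.closure_induction with
  | mem w hw => exact ⟨0, 1, by simp [Set.mem_singleton_iff.mp hw]⟩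
  | one => exact ⟨1, 0, by simp⟩
  | add z w _ _ ihz ihw =>
    obtain ⟨x, y, rfl⟩ := ihz
    obtain ⟨x', y', rfl⟩ := ihw
    exact ⟨x + x', y + y', by push_cast; ring⟩
  | neg z _ ihz =>
    obtain ⟨x, y, rfl⟩ := ihz
    exact ⟨-x, -y, by push_cast; ring⟩
  | mul z w _ _ ihz ihw =>
    obtain ⟨x, y, rfl⟩ := ihz
    obtain ⟨x', y', rfl⟩ := ihw
    refine ⟨x * x' - y * y', x * y' + y * x' + t * y * y', ?_⟩
    push_cast
    linear_combination -(y : ℂ) * y' * hα2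
  | inv z _ ihz =>
    obtain ⟨x, y, rfl⟩ := ihz
    have hconj :
        conj (((x : ℝ) : ℂ) + (y : ℝ) * α) = ((x + t * y : F) : ℝ) - (y : ℝ) * α := by
      simp only [map_add, map_mul, conj_ofReal, hαconj]
      push_cast; ring
    have hnormSq :
        normSq (((x : ℝ) : ℂ) + (y : ℝ) * α) = ((x ^ 2 + t * x * y + y ^ 2 : F) : ℝ) := by
      apply ofReal_injective
      rw [← mul_conj, hconj]
      push_cast
      linear_combination (-(y : ℂ) ^ 2) * hα2
    refine ⟨(x + t * y) * (x ^ 2 + t * x * y + y ^ 2)⁻¹, -y * (x ^ 2 + t * x * y + y ^ 2)⁻¹, ?_⟩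
    rw [inv_def, hconj, hnormSq]
    push_cast
    ring

theorem re_mem_closure_re {z : ℂ} (hz : z ∈ Subfield.closure {α}) :
    z.re ∈ Subfield.closure {α.re} := by
  obtain ⟨x, y, rfl⟩ := exists_add_mul_eq_of_mem_closure hα hz
  simpa using add_mem x.2 (mul_mem y.2 (Subfield.subset_closure rfl))

end closure

end Complex

/-- Let `m` be a positive integer and `α` a complex number of modulus 1
with `α ≠ ±1`, and set `a = Re α`.  Then `z ^ m - α` has a zero in the subfield `ℚ(α)`
of `ℂ` generated by `α` iff `T_m(x) = a` has a solution in the subfield `ℚ(a)` of `ℝ`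
generated by `a`. -/
theorem exists_mth_root_iff_chebyshev_root (m : ℕ) (hm : 0 < m) (α : ℂ)
    (hα : ‖α‖ = 1) (hα1 : α ≠ 1) (hα1' : α ≠ -1) :
    (∃ β ∈ Subfield.closure ({α} : Set ℂ), β ^ m = α) ↔
    ∃ b ∈ Subfield.closure ({α.re} : Set ℝ), (Chebyshev.T ℝ m).eval b = α.re := by
  constructor
  · rintro ⟨β, hβ, rfl⟩
    have hβ1 : ‖β‖ = 1 :=
      (pow_eq_one_iff_of_nonneg (norm_nonneg β) hm.ne').mp (by rwa [← norm_pow])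
    exact ⟨β.re, re_mem_closure_re hα hβ, (re_pow_eq_eval_T hβ1 m).symm⟩
  · rintro ⟨b, hb, hT⟩
    obtain ⟨ζ, hζ, hζm⟩ := Chebyshev.exists_pow_eq_of_eval_T_eq
      (sq_eq_two_mul_re_mul_sub_one hα) (by rw [← Chebyshev.complex_ofReal_eval_T, hT])
    have hα_expand := Chebyshev.pow_eq_eval_T_add_mul_eval_U hζ m
    rw [hζm, ← Chebyshev.complex_ofReal_eval_T, hT, ← Chebyshev.complex_ofReal_eval_U] at hα_expand
    set u := (Chebyshev.U ℝ (m - 1 : ℤ)).eval b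
    have hu : (u : ℂ) ≠ 0 := by
      intro hu
      exact ofReal_re_ne_of_norm_eq_one hα hα1 hα1'
        (by linear_combination -hα_expand - (ζ - b) * hu)
    refine ⟨b + (α - α.re) / u, ?_, ?_⟩
    · exact add_mem (ofReal_mem_closure hα hb)
        (div_mem (sub_mem (Subfield.subset_closure rfl) (ofReal_re_mem_closure hα))
          (ofReal_mem_closure hα (Chebyshev.eval_U_mem hb _)))
    · rw [show (α - α.re) / u = ζ - b by rw [div_eq_iff hu]; linear_combination hα_expand]
      simpa using hζm
end

section
/- (Tower lifting) Let α and β be complex numbers of modulus 1 with α ≠ ±1 and β ≠ ±1, and suppose β^m = α or β^m = α⁻¹ for a positive integer m. Set a = Re α and b = Re β, and assume b is constructible over the subfield ℚ(a) of ℝ generated by a. Then there exist k ∈ ℕ and a chain of subfields G₀ ⊆ G₁ ⊆ … ⊆ G_k of ℂ such that G₀ is the subfield ℚ(α) of ℂ generated by α, β ∈ G_k, and for each i < k there is a complex number x with x² ∈ G_i and G_{i+1} equal to the subfield generated by G_i together with x (each step a quadratic extension). -/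
def IsSquareRootStep {K : Type*} [Field K] (F G : Subfield K) : Prop :=
  ∃ x : K, x ^ 2 ∈ F ∧ G = Subfield.closure (↑F ∪ {x})

namespace IsSquareRootStep

variable {K L : Type*} [Field K] [Field L]

lemma of_sq_mem {F : Subfield K} {x : K} (hx : x ^ 2 ∈ F) :
    IsSquareRootStep F (F ⊔ Subfield.closure {x}) :=
  ⟨x, hx, by rw [Subfield.closure_union, Subfield.closure_eq]⟩

lemma map_sup {F G : Subfield K} (h : IsSquareRootStep F G) (f : K →+* L) (E : Subfield L) :
    IsSquareRootStep (F.map f ⊔ E) (G.map f ⊔ E) := by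
  obtain ⟨x, hx, rfl⟩ := h
  refine ⟨f x, SetLike.le_def.1 le_sup_left (Subfield.mem_map.2 ⟨x ^ 2, hx, map_pow f x 2⟩), ?_⟩
  rw [RingHom.map_field_closure, Set.image_union, Set.image_singleton, Subfield.closure_union,
    ← RingHom.map_field_closure, Subfield.closure_eq, Subfield.closure_union,
    Subfield.closure_eq, sup_right_comm]

end IsSquareRootStep

lemma exists_tower_snoc {K : Type*} [Field K] {Gs : ℕ → Subfield K} {k : ℕ}
    (hGs : ∀ i < k, IsSquareRootStep (Gs i) (Gs (i + 1))) {H : Subfield K}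
    (hH : IsSquareRootStep (Gs k) H) :
    ∃ Hs : ℕ → Subfield K, Hs 0 = Gs 0 ∧ Hs (k + 1) = H ∧
      ∀ i < k + 1, IsSquareRootStep (Hs i) (Hs (i + 1)) := by
  refine ⟨fun i => if i ≤ k then Gs i else H, by simp, by simp, fun i hi => ?_⟩
  rcases Nat.lt_succ_iff_lt_or_eq.1 hi with hik | rfl
  · simpa [hik.le, Nat.succ_le_of_lt hik] using hGs i hik
  · simpa using hH

namespace Complex

lemma ofReal_re_mem_of_norm_eq_one {α : ℂ} (hα : ‖α‖ = 1) {E : Subfield ℂ} (h : α ∈ E) :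
    (α.re : ℂ) ∈ E := by
  rw [re_eq_add_conj, ← inv_eq_conj hα]
  exact div_mem (add_mem h (inv_mem h)) (ofNat_mem E 2)

lemma map_ofRealHom_closure_re_le {α : ℂ} (hα : ‖α‖ = 1) :
    (Subfield.closure {α.re}).map ofRealHom ≤ Subfield.closure {α} := by
  rw [RingHom.map_field_closure, Set.image_singleton, Subfield.closure_le,
    Set.singleton_subset_iff]
  exact ofReal_re_mem_of_norm_eq_one hα (Subfield.subset_closure rfl)

lemma sub_ofReal_re_sq_of_norm_eq_one {β : ℂ} (hβ : ‖β‖ = 1) :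
    (β - β.re) ^ 2 = (β.re : ℂ) ^ 2 - 1 := by
  have hnorm : (β.re : ℂ) ^ 2 + (β.im : ℂ) ^ 2 = 1 := by
    have := normSq_apply β
    rw [← Complex.sq_norm, hβ] at this
    exact_mod_cast (by linarith : β.re ^ 2 + β.im ^ 2 = 1)
  have him : β - β.re = β.im * I := by
    nth_rewrite 1 [← re_add_im β]
    ring
  rw [him, mul_pow, I_sq]
  linear_combination -hnorm

end Complex

theorem tower_lifting_general (α β : ℂ)
    (hα : ‖α‖ = 1) (hβ : ‖β‖ = 1)
    (hb : IsConstructibleOver (Subfield.closure {α.re}) β.re) :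
    ∃ (k : ℕ) (Gs : ℕ → Subfield ℂ), Gs 0 = Subfield.closure ({α} : Set ℂ) ∧
      β ∈ Gs k ∧
      ∀ i < k, ∃ x : ℂ, x ^ 2 ∈ Gs i ∧ Gs (i + 1) = Subfield.closure (↑(Gs i) ∪ {x}) := by
  obtain ⟨k, Fs, hF0, hbk, hstep⟩ := hb
  let Gs i := (Fs i).map Complex.ofRealHom ⊔ Subfield.closure {α}
  have hre : (β.re : ℂ) ∈ Gs k :=
    SetLike.le_def.1 le_sup_left (Subfield.mem_map.2 ⟨β.re, hbk, rfl⟩)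
  have hsq : (β - β.re) ^ 2 ∈ Gs k := by
    rw [Complex.sub_ofReal_re_sq_of_norm_eq_one hβ]
    exact sub_mem (pow_mem hre 2) (one_mem _)
  obtain ⟨Hs, h0, hk, hsteps⟩ := exists_tower_snoc
    (fun i hi => IsSquareRootStep.map_sup (hstep i hi) Complex.ofRealHom (Subfield.closure {α}))
    (IsSquareRootStep.of_sq_mem hsq)
  refine ⟨k + 1, Hs, ?_, ?_, hsteps⟩
  · rw [h0, hF0]
    exact sup_eq_right.2 (Complex.map_ofRealHom_closure_re_le hα)
  · have hsum := add_mem (SetLike.le_def.1 le_sup_left hre)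
      (SetLike.le_def.1 le_sup_right (Subfield.subset_closure rfl) :
        β - β.re ∈ Gs k ⊔ Subfield.closure {β - β.re})
    rwa [add_sub_cancel, ← hk] at hsum

/-- **Tower lifting.** Let `α`, `β` be complex numbers of modulus 1, both
different from `±1`, with `β ^ m = α` or `β ^ m = α⁻¹` for a positive integer `m`.  Set
`a = Re α`, `b = Re β`, and assume `b` is constructible over the subfield `ℚ(a)` of `ℝ`
generated by `a`.  Then there is a tower of quadratic extensions of subfields of `ℂ`
starting at `ℚ(α)` whose top contains `β`. -/
theorem tower_lifting (m : ℕ) (hm : 0 < m) (α β : ℂ)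
    (hα : ‖α‖ = 1) (hβ : ‖β‖ = 1)
    (hα1 : α ≠ 1) (hα1' : α ≠ -1) (hβ1 : β ≠ 1) (hβ1' : β ≠ -1)
    (hpow : β ^ m = α ∨ β ^ m = α⁻¹)
    (hb : IsConstructibleOver (Subfield.closure {α.re}) β.re) :
    ∃ (k : ℕ) (Gs : ℕ → Subfield ℂ), Gs 0 = Subfield.closure ({α} : Set ℂ) ∧
      β ∈ Gs k ∧
      ∀ i < k, ∃ x : ℂ, x ^ 2 ∈ Gs i ∧ Gs (i + 1) = Subfield.closure (↑(Gs i) ∪ {x}) :=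
  tower_lifting_general α β hα hβ hb
end

section
/- Let K be a subfield of ℂ, let α ∈ K, and let m be an odd positive integer. Suppose β is a complex number with β^m = α such that β is algebraic over K and the degree of its minimal polynomial over K is a power of 2. Then there exists γ ∈ K with γ^m = α. -/
/-! Taking norms from `K⟮β⟯` down to `K` turns `β ^ m = α` into `N(β) ^ m = α ^ d`, where
`d = [K⟮β⟯ : K]` is a power of two and hence coprime to the odd `m`; in a field, `c ^ m = a ^ d`
with `m` and `d` coprime forces `a` to be an `m`-th power. -/

open IntermediateField Module

theorem exists_pow_eq_of_pow_eq_algebraMap_of_coprime_finrank {F S : Type*} [Field F] [Ring S]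
    [Algebra F S] {m : ℕ} {a : F} {x : S} (hx : x ^ m = algebraMap F S a)
    (hm : m.Coprime (finrank F S)) : ∃ c : F, c ^ m = a := by
  have hnorm : Algebra.norm F x ^ m = a ^ finrank F S := by
    rw [← map_pow, hx, Algebra.norm_algebraMap]
  obtain ⟨c, -, hc⟩ := (pow_eq_pow_iff_of_coprime hm).mp hnorm
  exact ⟨c, hc.symm⟩

theorem exists_mth_root_in_base_general (K : Subfield ℂ) (α : ℂ) (hα : α ∈ K)
    (m : ℕ) (hmodd : Odd m) (β : ℂ) (hβ : β ^ m = α)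
    (halg : IsIntegral K β) (hdeg : ∃ j : ℕ, (minpoly K β).natDegree = 2 ^ j) :
    ∃ γ ∈ K, γ ^ m = α := by
  obtain ⟨j, hj⟩ := hdeg
  have hgen : AdjoinSimple.gen K β ^ m = algebraMap K K⟮β⟯ ⟨α, hα⟩ := Subtype.ext hβ
  have hcop : m.Coprime (finrank K K⟮β⟯) := by
    rw [adjoin.finrank halg, hj]
    exact (Nat.coprime_two_right.mpr hmodd).pow_right j
  obtain ⟨γ, hγ⟩ := exists_pow_eq_of_pow_eq_algebraMap_of_coprime_finrank hgen hcop
  exact ⟨γ, γ.2, congrArg Subtype.val hγ⟩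

/-- Let `K` be a subfield of `ℂ`, `α ∈ K`, and `m` an odd positive
integer.  If `β` is a complex number with `β ^ m = α` that is algebraic over `K` with
minimal polynomial of degree a power of 2, then some `γ ∈ K` satisfies `γ ^ m = α`. -/
theorem exists_mth_root_in_base (K : Subfield ℂ) (α : ℂ) (hα : α ∈ K)
    (m : ℕ) (hm : 0 < m) (hmodd : Odd m) (β : ℂ) (hβ : β ^ m = α)
    (halg : IsIntegral K β) (hdeg : ∃ j : ℕ, (minpoly K β).natDegree = 2 ^ j) :
    ∃ γ ∈ K, γ ^ m = α :=
  exists_mth_root_in_base_general K α hα m hmodd β hβ halg hdeg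
end

section
/- Let f be a polynomial with rational coefficients of degree d ≥ 1. Then there exists a real constant C > 0 such that for every real B ≥ 1, the number of rational numbers y in the image of f (i.e., y = f(x) for some x ∈ ℚ) with H(y) ≤ B is at most the number of rational numbers z with H(z) ≤ C·B^{1/d}. -/
open Polynomial

/-- The height of a rational number `x` (in lowest terms): the maximum of the absolute
value of its numerator and its denominator. -/
def ratHeight (x : ℚ) : ℕ := max x.num.natAbs x.den

/-!
`ratHeight` is the multiplicative height `mulHeight₁` on `ℚ`, and `x ↦ f x` is the map
`[x : 1] ↦ [F(x, 1) : 1]` on `ℙ¹` given by the homogenization `F` of `f` together with `Y ^ d`.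
Dividing `X ^ (2d)` by `f` shows that `X ^ (2d)` and `Y ^ (2d)` lie in the ideal `(F, Y ^ d)`
with homogeneous cofactors of degree `d`, so this map is a morphism and the general lower bound
for heights under morphisms gives `c · H(x) ^ d ≤ H(f x)`. Hence every `y = f x` of height at
most `B` has a preimage `x` of height at most `(B / c) ^ (1 / d)`.
-/

namespace Polynomial

variable {K : Type*} [Field K]

theorem natDegree_div_le_sub (p q : K[X]) : (p / q).natDegree ≤ p.natDegree - q.natDegree := by
  rcases eq_or_ne q 0 with rfl | hq
  · simp
  rw [div_def]
  refine (natDegree_C_mul_le _ _).trans ?_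
  rw [natDegree_divByMonic _ (monic_mul_leadingCoeff_inv hq), natDegree_mul_leadingCoeff_inv _ hq]

theorem natDegree_mod_le {q : K[X]} (p : K[X]) (hq : q ≠ 0) : (p % q).natDegree ≤ q.natDegree :=
  natDegree_le_natDegree (degree_mod_lt p hq).le

end Polynomial

namespace Height

variable {K : Type*} [Field K] [AdmissibleAbsValues K]

open MvPolynomial in
theorem exists_pos_mul_mulHeight₁_pow_le_mulHeight₁_eval (f : K[X]) :
    ∃ C > 0, ∀ x : K, C * mulHeight₁ x ^ f.natDegree ≤ mulHeight₁ (f.eval x) := by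
  rcases eq_or_ne f 0 with rfl | hf
  · exact ⟨1, one_pos, fun x => by simp⟩
  set d := f.natDegree
  have hdiv : (Polynomial.X ^ (d + d) / f).natDegree ≤ d := by
    grw [natDegree_div_le_sub, natDegree_X_pow]; omega
  have hmod : (Polynomial.X ^ (d + d) % f).natDegree ≤ d := natDegree_mod_le _ hf
  let q : Fin 2 × Fin 2 → MvPolynomial (Fin 2) K := fun a =>
    ![![(Polynomial.X ^ (d + d) / f).homogenize d, (Polynomial.X ^ (d + d) % f).homogenize d],
      ![0, X 1 ^ d]] a.1 a.2
  have hq : ∀ a, (q a).IsHomogeneous d := by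
    rintro ⟨i, j⟩
    fin_cases i <;> fin_cases j
    · exact isHomogeneous_homogenize _
    · exact isHomogeneous_homogenize _
    · exact isHomogeneous_zero _ _ _
    · exact isHomogeneous_X_pow _ _
  obtain ⟨C, hC, hle⟩ := mulHeight_eval_ge' (N := d) hq
  refine ⟨C, hC, fun x => ?_⟩
  have heval : (fun j => eval ![x, 1] (f.toTupleMvPolynomial j)) = ![f.eval x, 1] := by
    ext j; fin_cases j <;> simp [toTupleMvPolynomial, eval_homogenize]
  have hbound := hle f.toTupleMvPolynomial (x := ![x, 1]) fun k => by
    fin_cases k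
    · simpa [q, toTupleMvPolynomial, eval_homogenize, hdiv, hmod] using
        congrArg (Polynomial.eval x) (EuclideanDomain.div_add_mod' (Polynomial.X ^ (d + d)) f)
    · simp [q, toTupleMvPolynomial]
  rwa [heval, ← mulHeight₁_eq_mulHeight, ← mulHeight₁_eq_mulHeight] at hbound

end Height

theorem Set.ncard_range_inter_le_of_preimage_subset {α β : Type*} (g : α → β) {s : Set β}
    {t : Set α} (ht : t.Finite) (h : g ⁻¹' s ⊆ t) : (Set.range g ∩ s).ncard ≤ t.ncard :=
  calc (Set.range g ∩ s).ncard ≤ (g '' t).ncard :=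
        Set.ncard_le_ncard (by rintro _ ⟨⟨x, rfl⟩, hx⟩; exact ⟨x, h hx, rfl⟩) (ht.image g)
    _ ≤ t.ncard := Set.ncard_image_le ht

theorem ratHeight_eq_mulHeight₁ (x : ℚ) : (ratHeight x : ℝ) = Height.mulHeight₁ x :=
  (Rat.mulHeight₁_eq_max x).symm

theorem finite_setOf_ratHeight_le (B : ℝ) : {x : ℚ | (ratHeight x : ℝ) ≤ B}.Finite := by
  simpa only [ratHeight_eq_mulHeight₁] using NumberField.finite_setOfPred_mulHeight₁_le ℚ B

/-- For a polynomial `f ∈ ℚ[X]` of degree `d ≥ 1` there is a constant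
`C > 0` such that for every real `B ≥ 1`, the number of rationals of height `≤ B` in the
image of `f` is at most the number of rationals of height `≤ C·B^{1/d}`. -/
theorem image_height_count_le (f : ℚ[X]) (hd : 1 ≤ f.natDegree) :
    ∃ C : ℝ, 0 < C ∧ ∀ B : ℝ, 1 ≤ B →
      {y : ℚ | (∃ x : ℚ, f.eval x = y) ∧ (ratHeight y : ℝ) ≤ B}.ncard ≤
      {z : ℚ | (ratHeight z : ℝ) ≤ C * B ^ (1 / (f.natDegree : ℝ))}.ncard := by
  obtain ⟨c, hc, hle⟩ := Height.exists_pos_mul_mulHeight₁_pow_le_mulHeight₁_eval f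
  refine ⟨c⁻¹ ^ (1 / (f.natDegree : ℝ)), by positivity, fun B hB => ?_⟩
  refine Set.ncard_range_inter_le_of_preimage_subset (f.eval ·)
    (finite_setOf_ratHeight_le _) fun x hx => ?_
  have hpow : (ratHeight x : ℝ) ^ f.natDegree ≤ c⁻¹ * B := by
    rw [le_inv_mul_iff₀ hc, ratHeight_eq_mulHeight₁]
    exact (hle x).trans (ratHeight_eq_mulHeight₁ _ ▸ hx)
  rw [Set.mem_ofPred_eq, ← Real.mul_rpow (by positivity) (zero_le_one.trans hB), one_div,
    Real.le_rpow_inv_iff_of_pos (by positivity) (by positivity) (by exact_mod_cast hd),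
    Real.rpow_natCast]
  exact hpow
end
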